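/- arXiv:2212.13938 — 3 statements merged into one kernel-verified Lean document; each statement's English description precedes it below -/
import Mathlib

section
/- Let v = (1,1,1,1,1,1,1,-1)/(2√2) ∈ ℝ^8 and ρ = v vᵀ. Then the minimum over all diagonal matrices δ = diag(x₁,…,x₈) with xᵢ ≥ 0 and Σxᵢ = 1 of the Frobenius norm ‖ρ - δ‖_F equals √(7/8) = √14/4, attained at xᵢ = 1/8 for all i. -/
open Matrix

/-- Frobenius norm of a real square matrix. -/
noncomputable def frob {n : ℕ} (A : Matrix (Fin n) (Fin n) ℝ) : ℝ :=
  Real.sqrt (Matrix.trace (Aᵀ * A))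

/-- Grover state after the first oracle step, `v = (1,…,1,-1)/(2√2)`. -/
noncomputable def grover1 : Fin 8 → ℝ := fun i =>
  (if i = 7 then -1 else 1) / (2 * Real.sqrt 2)

lemma trace_eq {n : ℕ} (A : Matrix (Fin n) (Fin n) ℝ) :
    Matrix.trace (Aᵀ * A) = ∑ j, ∑ i, (A i j)^2 := by
  simp [Matrix.trace, Matrix.mul_apply, sq, Matrix.diag]

lemma sq_grover (i : Fin 8) : grover1 i ^ 2 = 1/8 := by
  have h2 : Real.sqrt 2 ^ 2 = 2 := Real.sq_sqrt (by norm_num)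
  unfold grover1
  split <;> rw [div_pow, mul_pow, h2] <;> norm_num

lemma key (x : Fin 8 → ℝ) :
    Matrix.trace ((Matrix.vecMulVec grover1 grover1 - Matrix.diagonal x)ᵀ *
      (Matrix.vecMulVec grover1 grover1 - Matrix.diagonal x))
      = 7/8 + ∑ i, (x i - 1/8)^2 := by
  rw [trace_eq]
  have h1 : ∀ j : Fin 8, ∑ i, ((Matrix.vecMulVec grover1 grover1 - Matrix.diagonal x) i j)^2
      = (x j - 1/8)^2 + 7/64 := by
    intro j
    rw [← Finset.add_sum_erase _ _ (Finset.mem_univ j)]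
    have hd : ((Matrix.vecMulVec grover1 grover1 - Matrix.diagonal x) j j)^2
        = (x j - 1/8)^2 := by
      have hm : grover1 j * grover1 j = 1/8 := by have := sq_grover j; nlinarith
      simp only [Matrix.sub_apply, Matrix.vecMulVec_apply, Matrix.diagonal_apply_eq, hm]
      ring
    have ho : ∑ i ∈ Finset.univ.erase j,
        ((Matrix.vecMulVec grover1 grover1 - Matrix.diagonal x) i j)^2 = 7/64 := by
      have he : ∀ i ∈ Finset.univ.erase j,
          ((Matrix.vecMulVec grover1 grover1 - Matrix.diagonal x) i j)^2 = 1/64 := by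
        intro i hi
        have hij : i ≠ j := Finset.ne_of_mem_erase hi
        simp only [Matrix.sub_apply, Matrix.vecMulVec_apply,
          Matrix.diagonal_apply_ne _ hij, sub_zero, mul_pow, sq_grover]
        norm_num
      rw [Finset.sum_congr rfl he, Finset.sum_const,
        Finset.card_erase_of_mem (Finset.mem_univ j)]
      norm_num
    rw [hd, ho]
  rw [Finset.sum_congr rfl (fun j _ => h1 j), Finset.sum_add_distrib, Finset.sum_const]
  simp only [Finset.card_univ, Fintype.card_fin]
  ring

theorem stmt0 :
    IsLeast { d : ℝ | ∃ x : Fin 8 → ℝ, (∀ i, 0 ≤ x i) ∧ (∑ i, x i) = 1 ∧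
        d = frob (Matrix.vecMulVec grover1 grover1 - Matrix.diagonal x) }
      (Real.sqrt (7 / 8)) ∧
    frob (Matrix.vecMulVec grover1 grover1 - Matrix.diagonal (fun _ => 1 / 8))
      = Real.sqrt (7 / 8) ∧
    Real.sqrt (7 / 8) = Real.sqrt 14 / 4 := by
  have hval : frob (Matrix.vecMulVec grover1 grover1 - Matrix.diagonal (fun _ => (1:ℝ) / 8))
      = Real.sqrt (7 / 8) := by
    unfold frob
    rw [key]
    norm_num
  refine ⟨⟨⟨fun _ => 1/8, fun i => by norm_num, by simp, hval.symm⟩, ?_⟩, hval, ?_⟩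
  · rintro d ⟨x, -, -, rfl⟩
    unfold frob
    rw [key]
    apply Real.sqrt_le_sqrt
    have : 0 ≤ ∑ i, (x i - 1/8)^2 := Finset.sum_nonneg fun i _ => sq_nonneg _
    linarith
  · rw [show (7:ℝ)/8 = 14/16 by norm_num,
      Real.sqrt_div (by norm_num : (0:ℝ) ≤ 14) 16,
      show Real.sqrt 16 = 4 by
        rw [show (16:ℝ) = 4^2 by norm_num, Real.sqrt_sq (by norm_num : (0:ℝ) ≤ 4)]]
end

section
/- Let ρ = q|φ₁⟩⟨φ₁| + (1−q)|φ₂⟩⟨φ₂| where |φ₁⟩ = |00⟩⊗(y₁|0⟩ + y₂|1⟩) and |φ₂⟩ = |00⟩⊗(−y₂|0⟩ + y₁|1⟩) with y₁² + y₂² = 1 and 0 ≤ q ≤ 1. Then the maximum over pure product states |φ⟩ of ⟨φ|ρ|φ⟩ equals max{q, 1−q}, so G(ρ) = −2 log √(max{q,1−q}). -/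
open Matrix Complex

/-- `|φ₁⟩ = |00⟩⊗(y₁|0⟩ + y₂|1⟩)` on three qubits. -/
noncomputable def phi1 (y₁ y₂ : ℝ) : Fin 2 × Fin 2 × Fin 2 → ℂ := fun p =>
  if p.1 = 0 ∧ p.2.1 = 0 then (if p.2.2 = 0 then (y₁ : ℂ) else (y₂ : ℂ)) else 0

/-- `|φ₂⟩ = |00⟩⊗(−y₂|0⟩ + y₁|1⟩)` on three qubits. -/
noncomputable def phi2 (y₁ y₂ : ℝ) : Fin 2 × Fin 2 × Fin 2 → ℂ := fun p =>
  if p.1 = 0 ∧ p.2.1 = 0 then (if p.2.2 = 0 then (-y₂ : ℂ) else (y₁ : ℂ)) else 0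

lemma sum1 (y₁ y₂ : ℝ) (u₁ u₂ u₃ : Fin 2 → ℂ) :
    (∑ p : Fin 2 × Fin 2 × Fin 2,
      (starRingEnd ℂ) (u₁ p.1 * u₂ p.2.1 * u₃ p.2.2) * phi1 y₁ y₂ p)
    = (starRingEnd ℂ) (u₁ 0 * u₂ 0) *
      ((starRingEnd ℂ) (u₃ 0) * y₁ + (starRingEnd ℂ) (u₃ 1) * y₂) := by
  simp [phi1, Fintype.sum_prod_type, Fin.sum_univ_two]; ring

lemma sum2 (y₁ y₂ : ℝ) (u₁ u₂ u₃ : Fin 2 → ℂ) :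
    (∑ p : Fin 2 × Fin 2 × Fin 2,
      (starRingEnd ℂ) (u₁ p.1 * u₂ p.2.1 * u₃ p.2.2) * phi2 y₁ y₂ p)
    = (starRingEnd ℂ) (u₁ 0 * u₂ 0) *
      ((starRingEnd ℂ) (u₃ 0) * (-y₂) + (starRingEnd ℂ) (u₃ 1) * y₁) := by
  simp [phi2, Fintype.sum_prod_type, Fin.sum_univ_two]; ring

theorem stmt12 (y₁ y₂ q : ℝ) (hy : y₁ ^ 2 + y₂ ^ 2 = 1)
    (hq0 : 0 ≤ q) (hq1 : q ≤ 1) :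
    IsGreatest { t : ℝ | ∃ u₁ u₂ u₃ : Fin 2 → ℂ,
        (∑ i, Complex.normSq (u₁ i)) = 1 ∧
        (∑ i, Complex.normSq (u₂ i)) = 1 ∧
        (∑ i, Complex.normSq (u₃ i)) = 1 ∧
        t = q * Complex.normSq (∑ p : Fin 2 × Fin 2 × Fin 2,
              (starRingEnd ℂ) (u₁ p.1 * u₂ p.2.1 * u₃ p.2.2) * phi1 y₁ y₂ p)
          + (1 - q) * Complex.normSq (∑ p : Fin 2 × Fin 2 × Fin 2,
              (starRingEnd ℂ) (u₁ p.1 * u₂ p.2.1 * u₃ p.2.2) * phi2 y₁ y₂ p) }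
      (max q (1 - q)) ∧
    -2 * Real.log (Real.sqrt (max q (1 - q))) = -Real.log (max q (1 - q)) := by
  refine ⟨⟨?_, ?_⟩, ?_⟩
  · -- membership
    rcases le_total (1 - q) q with h | h
    · rw [max_eq_left h]
      refine ⟨![1, 0], ![1, 0], ![(y₁ : ℂ), (y₂ : ℂ)], ?_, ?_, ?_, ?_⟩
      · simp [Fin.sum_univ_two]
      · simp [Fin.sum_univ_two]
      · simp [Fin.sum_univ_two, Complex.normSq_ofReal]
        nlinarith [hy]
      · rw [sum1, sum2]
        simp only [Matrix.cons_val_zero, Matrix.cons_val_one, Matrix.head_cons]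
        simp only [Complex.normSq_apply, Complex.mul_re, Complex.mul_im,
          Complex.add_re, Complex.add_im, Complex.conj_re, Complex.conj_im,
          Complex.ofReal_re, Complex.ofReal_im, Complex.one_re, Complex.one_im,
          Complex.neg_re, Complex.neg_im, _root_.map_mul, _root_.map_one]
        linear_combination (-q * (y₁ ^ 2 + y₂ ^ 2 + 1)) * hy
    · rw [max_eq_right h]
      refine ⟨![1, 0], ![1, 0], ![(-y₂ : ℂ), (y₁ : ℂ)], ?_, ?_, ?_, ?_⟩
      · simp [Fin.sum_univ_two]
      · simp [Fin.sum_univ_two]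
      · simp [Fin.sum_univ_two, Complex.normSq_ofReal]
        nlinarith [hy]
      · rw [sum1, sum2]
        simp only [Matrix.cons_val_zero, Matrix.cons_val_one, Matrix.head_cons]
        simp only [Complex.normSq_apply, Complex.mul_re, Complex.mul_im,
          Complex.add_re, Complex.add_im, Complex.conj_re, Complex.conj_im,
          Complex.ofReal_re, Complex.ofReal_im, Complex.one_re, Complex.one_im,
          Complex.neg_re, Complex.neg_im, _root_.map_mul, _root_.map_one]
        linear_combination (-(1 - q) * (y₁ ^ 2 + y₂ ^ 2 + 1)) * hy
  · -- upper bound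
    rintro t ⟨u₁, u₂, u₃, h1, h2, h3, rfl⟩
    rw [sum1, sum2]
    rw [Complex.normSq_mul, Complex.normSq_mul]
    set c := Complex.normSq ((starRingEnd ℂ) (u₁ 0 * u₂ 0)) with hc
    set A := Complex.normSq ((starRingEnd ℂ) (u₃ 0) * y₁ + (starRingEnd ℂ) (u₃ 1) * y₂) with hA
    set B := Complex.normSq ((starRingEnd ℂ) (u₃ 0) * (-y₂) + (starRingEnd ℂ) (u₃ 1) * y₁) with hB
    have hc1 : c ≤ 1 := by
      rw [hc, Complex.normSq_conj, Complex.normSq_mul]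
      have e1 : Complex.normSq (u₁ 0) ≤ 1 := by
        rw [Fin.sum_univ_two] at h1
        nlinarith [Complex.normSq_nonneg (u₁ 1)]
      have e2 : Complex.normSq (u₂ 0) ≤ 1 := by
        rw [Fin.sum_univ_two] at h2
        nlinarith [Complex.normSq_nonneg (u₂ 1)]
      nlinarith [Complex.normSq_nonneg (u₁ 0), Complex.normSq_nonneg (u₂ 0)]
    have hAB : A + B = 1 := by
      rw [Fin.sum_univ_two] at h3
      simp only [hA, hB, Complex.normSq_apply, Complex.add_re, Complex.add_im,
        Complex.mul_re, Complex.mul_im, Complex.conj_re, Complex.conj_im,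
        Complex.ofReal_re, Complex.ofReal_im, Complex.neg_re, Complex.neg_im] at *
      nlinarith [h3, hy]
    have hA0 : 0 ≤ A := Complex.normSq_nonneg _
    have hB0 : 0 ≤ B := Complex.normSq_nonneg _
    have hc0 : 0 ≤ c := Complex.normSq_nonneg _
    have hqm : q ≤ max q (1 - q) := le_max_left _ _
    have hqm' : 1 - q ≤ max q (1 - q) := le_max_right _ _
    calc q * (c * A) + (1 - q) * (c * B)
        ≤ max q (1 - q) * (c * A) + max q (1 - q) * (c * B) := by
          have t1 := mul_le_mul_of_nonneg_right hqm (mul_nonneg hc0 hA0)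
          have t2 := mul_le_mul_of_nonneg_right hqm' (mul_nonneg hc0 hB0)
          linarith
      _ = max q (1 - q) * c * (A + B) := by ring
      _ = max q (1 - q) * c := by rw [hAB]; ring
      _ ≤ max q (1 - q) * 1 := by
          have : 0 ≤ max q (1 - q) := le_trans hq0 hqm
          nlinarith
      _ = max q (1 - q) := by ring
  · have hm : 0 ≤ max q (1 - q) := le_trans hq0 (le_max_left _ _)
    rw [Real.log_sqrt hm]
    ring
end

section
/- Let q = (1/2)[1 + √(1 − 4(AC₂ − BC₁)²)] where A, B, C₁, C₂ are reals with A² + B² + C₁² + C₂² = 1. Then 1/2 ≤ q ≤ 1, and the geometric measure of the state ρ₃ = q|φ₁⟩⟨φ₁| + (1−q)|φ₂⟩⟨φ₂| (with |φ₁⟩, |φ₂⟩ orthogonal product states) equals G(ρ₃) = −log q. -/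
open Matrix Complex

lemma aux_norm (z w : ℂ) (a b : ℝ) :
    Complex.normSq (z * (a : ℂ) + w * (b : ℂ)) +
      Complex.normSq (z * ((-b : ℝ) : ℂ) + w * (a : ℂ))
    = (Complex.normSq z + Complex.normSq w) * (a ^ 2 + b ^ 2) := by
  simp only [Complex.normSq_apply, Complex.add_re, Complex.add_im, Complex.mul_re,
    Complex.mul_im, Complex.ofReal_re, Complex.ofReal_im]
  ring

theorem stmt19 (A B C₁ C₂ : ℝ) (hnorm : A ^ 2 + B ^ 2 + C₁ ^ 2 + C₂ ^ 2 = 1)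
    (y₁ y₂ : ℝ) (hy : y₁ ^ 2 + y₂ ^ 2 = 1)
    (q : ℝ) (hq : q = (1 / 2) * (1 + Real.sqrt (1 - 4 * (A * C₂ - B * C₁) ^ 2))) :
    1 / 2 ≤ q ∧ q ≤ 1 ∧
    IsGreatest { t : ℝ | ∃ u₁ u₂ u₃ : Fin 2 → ℂ,
        (∑ i, Complex.normSq (u₁ i)) = 1 ∧
        (∑ i, Complex.normSq (u₂ i)) = 1 ∧
        (∑ i, Complex.normSq (u₃ i)) = 1 ∧
        t = q * Complex.normSq (∑ p : Fin 2 × Fin 2 × Fin 2,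
              (starRingEnd ℂ) (u₁ p.1 * u₂ p.2.1 * u₃ p.2.2) * phi1 y₁ y₂ p)
          + (1 - q) * Complex.normSq (∑ p : Fin 2 × Fin 2 × Fin 2,
              (starRingEnd ℂ) (u₁ p.1 * u₂ p.2.1 * u₃ p.2.2) * phi2 y₁ y₂ p) }
      q ∧
    -2 * Real.log (Real.sqrt q) = -Real.log q := by
  have hd : 0 ≤ 1 - 4 * (A * C₂ - B * C₁) ^ 2 := by
    have h1 : 0 ≤ ((A - C₂) ^ 2 + (B + C₁) ^ 2) * ((A + C₂) ^ 2 + (B - C₁) ^ 2) :=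
      mul_nonneg (by positivity) (by positivity)
    nlinarith [sq_nonneg (A ^ 2 + B ^ 2 + C₁ ^ 2 + C₂ ^ 2)]
  have hs0 : 0 ≤ Real.sqrt (1 - 4 * (A * C₂ - B * C₁) ^ 2) := Real.sqrt_nonneg _
  have hs1 : Real.sqrt (1 - 4 * (A * C₂ - B * C₁) ^ 2) ≤ 1 :=
    Real.sqrt_le_one.mpr (by nlinarith [sq_nonneg (A * C₂ - B * C₁)])
  have hqlb : 1 / 2 ≤ q := by rw [hq]; linarith
  have hqub : q ≤ 1 := by rw [hq]; linarith
  refine ⟨hqlb, hqub, ⟨⟨fun i => if i = 0 then 1 else 0, fun i => if i = 0 then 1 else 0,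
      fun i => if i = 0 then (y₁ : ℂ) else (y₂ : ℂ), ?_, ?_, ?_, ?_⟩, ?_⟩, ?_⟩
  · simp [Fin.sum_univ_succ]
  · simp [Fin.sum_univ_succ]
  · simp [Fin.sum_univ_succ, Complex.normSq]; linarith
  · simp only [phi1, phi2, Fintype.sum_prod_type, Fin.sum_univ_succ, Finset.sum_empty,
      Fin.succ_zero_eq_one]
    simp [Complex.normSq, ← Complex.ofReal_mul, ← Complex.ofReal_add]
    linear_combination (-q * (y₁ ^ 2 + y₂ ^ 2 + 1)) * hy
  · rintro t ⟨u₁, u₂, u₃, h1, h2, h3, ht⟩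
    have e1 : (∑ p : Fin 2 × Fin 2 × Fin 2,
        (starRingEnd ℂ) (u₁ p.1 * u₂ p.2.1 * u₃ p.2.2) * phi1 y₁ y₂ p)
        = (starRingEnd ℂ) (u₁ 0) * (starRingEnd ℂ) (u₂ 0) *
          ((starRingEnd ℂ) (u₃ 0) * (y₁ : ℂ) + (starRingEnd ℂ) (u₃ 1) * (y₂ : ℂ)) := by
      simp [phi1, Fintype.sum_prod_type, Fin.sum_univ_succ]; ring
    have e2 : (∑ p : Fin 2 × Fin 2 × Fin 2,
        (starRingEnd ℂ) (u₁ p.1 * u₂ p.2.1 * u₃ p.2.2) * phi2 y₁ y₂ p)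
        = (starRingEnd ℂ) (u₁ 0) * (starRingEnd ℂ) (u₂ 0) *
          ((starRingEnd ℂ) (u₃ 0) * ((-y₂ : ℝ) : ℂ) + (starRingEnd ℂ) (u₃ 1) * (y₁ : ℂ)) := by
      simp [phi2, Fintype.sum_prod_type, Fin.sum_univ_succ]; ring
    rw [e1, e2] at ht
    simp only [Complex.normSq_mul, Complex.normSq_conj] at ht
    set n1 := Complex.normSq (u₁ 0) with hn1
    set n2 := Complex.normSq (u₂ 0) with hn2
    have hn1' : n1 ≤ 1 := by
      have := Complex.normSq_nonneg (u₁ 1)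
      simp [Fin.sum_univ_succ] at h1; linarith
    have hn2' : n2 ≤ 1 := by
      have := Complex.normSq_nonneg (u₂ 1)
      simp [Fin.sum_univ_succ] at h2; linarith
    have hn1n : 0 ≤ n1 := Complex.normSq_nonneg _
    have hn2n : 0 ≤ n2 := Complex.normSq_nonneg _
    have h3' : Complex.normSq (u₃ 0) + Complex.normSq (u₃ 1) = 1 := by
      simpa [Fin.sum_univ_succ] using h3
    set w1 := Complex.normSq ((starRingEnd ℂ) (u₃ 0) * (y₁ : ℂ) + (starRingEnd ℂ) (u₃ 1) * (y₂ : ℂ)) with hw1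
    set w2 := Complex.normSq ((starRingEnd ℂ) (u₃ 0) * ((-y₂ : ℝ) : ℂ) + (starRingEnd ℂ) (u₃ 1) * (y₁ : ℂ)) with hw2
    have hw : w1 + w2 = 1 := by
      rw [hw1, hw2, aux_norm ((starRingEnd ℂ) (u₃ 0)) ((starRingEnd ℂ) (u₃ 1)) y₁ y₂]
      rw [Complex.normSq_conj, Complex.normSq_conj, h3', hy, one_mul]
    have hw1n : 0 ≤ w1 := Complex.normSq_nonneg _
    have hw2n : 0 ≤ w2 := Complex.normSq_nonneg _
    have key : q * w1 + (1 - q) * w2 ≤ q := by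
      have h2q : 0 ≤ 2 * q - 1 := by linarith
      have hw1le : w1 ≤ 1 := by linarith
      nlinarith [mul_nonneg h2q (by linarith : (0:ℝ) ≤ 1 - w1)]
    have hA : n1 * n2 ≤ 1 := mul_le_one₀ hn1' hn2n hn2'
    calc t = (n1 * n2) * (q * w1 + (1 - q) * w2) := by rw [ht]; ring
      _ ≤ (n1 * n2) * q := mul_le_mul_of_nonneg_left key (mul_nonneg hn1n hn2n)
      _ ≤ 1 * q := mul_le_mul_of_nonneg_right hA (by linarith)
      _ = q := one_mul q
  · have hq0 : 0 < q := by linarith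
    rw [Real.log_sqrt hq0.le]; ring
end
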